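/- For every a ∈ ℝ⁵ and λ > 0, the function δ_{a,λ}(x) = c₀ λ^{1/2} (1 + λ²|x−a|²)^{−1/2} with c₀ = 105^{1/8} satisfies Δ²δ_{a,λ} = δ_{a,λ}⁹ pointwise on ℝ⁵. -/

import Mathlib

/-!
Writing `s = ‖x - a‖²`, the bubble is the profile `K (1 + λ² s)^(-1/2)` with `K = c₀ λ^{1/2}`.
In `ℝ⁵` the Laplacian of `y ↦ g ‖y - a‖²` is `4 s g''(s) + 10 g'(s)`, and by `λ² s = (1 + λ² s) - 1`
this operator maps a power `K (1 + λ² s)^q` to a combination of the powers `q - 1` and `q - 2`.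
Applying it twice gives `Δ²δ = 105 K λ⁴ (1 + λ² s)^(-9/2)`, which is `δ⁹` because `c₀⁸ = 105`.
-/

open MeasureTheory Real Filter Topology

noncomputable section

abbrev E5 := EuclideanSpace ℝ (Fin 5)

/-- `c₀ = 105^{1/8}`. -/
def c0 : ℝ := (105 : ℝ) ^ ((1:ℝ)/8)

/-- The standard bubble `δ_{a,λ}(x) = c₀ λ^{1/2}(1+λ²|x−a|²)^{−1/2}`. -/
def deltaFn (a : E5) (l : ℝ) (x : E5) : ℝ :=
  c0 * l ^ ((1:ℝ)/2) * (1 + l ^ 2 * ‖x - a‖ ^ 2) ^ (-(1:ℝ)/2)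

/-- The Laplacian on `ℝ⁵`, as a sum of second partial derivatives. -/
def lap (f : E5 → ℝ) (x : E5) : ℝ :=
  ∑ i : Fin 5, fderiv ℝ (fun y => fderiv ℝ f y (EuclideanSpace.single i 1)) x
      (EuclideanSpace.single i 1)

theorem hasFDerivAt_comp_norm_sub_sq {E : Type*} [NormedAddCommGroup E] [InnerProductSpace ℝ E]
    {g : ℝ → ℝ} {g' : ℝ} {a x : E} (hg : HasDerivAt g g' (‖x - a‖ ^ 2)) :
    HasFDerivAt (fun y => g (‖y - a‖ ^ 2)) ((2 * g') • innerSL ℝ (x - a)) x := by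
  have hN : HasFDerivAt (fun y => ‖y - a‖ ^ 2) ((2 : ℝ) • innerSL ℝ (x - a)) x := by
    simpa [two_smul] using ((hasFDerivAt_id x).sub_const a).norm_sq
  refine (hg.comp_hasFDerivAt x hN).congr_fderiv ?_
  rw [smul_smul, mul_comm]

section Radial

variable {g g' g'' : ℝ → ℝ}

theorem fderiv_comp_norm_sub_sq_single (hg : ∀ s, 0 ≤ s → HasDerivAt g (g' s) s)
    (a : E5) (i : Fin 5) :
    (fun y => fderiv ℝ (fun z => g (‖z - a‖ ^ 2)) y (EuclideanSpace.single i 1))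
      = fun y => 2 * g' (‖y - a‖ ^ 2) * (y i - a i) := by
  funext y
  rw [(hasFDerivAt_comp_norm_sub_sq (hg _ (sq_nonneg _))).fderiv]
  simp [EuclideanSpace.inner_single_right]

theorem lap_comp_norm_sub_sq (hg : ∀ s, 0 ≤ s → HasDerivAt g (g' s) s)
    (hg' : ∀ s, 0 ≤ s → HasDerivAt g' (g'' s) s) (a : E5) :
    lap (fun y => g (‖y - a‖ ^ 2))
      = fun y => 4 * ‖y - a‖ ^ 2 * g'' (‖y - a‖ ^ 2) + 10 * g' (‖y - a‖ ^ 2) := by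
  funext x
  have hsecond : ∀ i : Fin 5,
      fderiv ℝ (fun y => 2 * g' (‖y - a‖ ^ 2) * (y i - a i)) x (EuclideanSpace.single i 1)
        = 4 * g'' (‖x - a‖ ^ 2) * (x i - a i) ^ 2 + 2 * g' (‖x - a‖ ^ 2) := by
    intro i
    have hcoord : HasFDerivAt (fun y : E5 => y i - a i) (EuclideanSpace.proj (𝕜 := ℝ) i) x :=
      (EuclideanSpace.proj (𝕜 := ℝ) i).hasFDerivAt.sub_const (a i)
    have h : HasFDerivAt (fun y => 2 * g' (‖y - a‖ ^ 2) * (y i - a i)) _ x :=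
      ((hasFDerivAt_comp_norm_sub_sq (hg' _ (sq_nonneg _))).const_mul 2).mul hcoord
    rw [h.fderiv]
    simp [EuclideanSpace.inner_single_right]
    ring
  have hnorm : ‖x - a‖ ^ 2 = ∑ i : Fin 5, (x i - a i) ^ 2 := by
    simp [EuclideanSpace.real_norm_sq_eq]
  simp only [lap, fderiv_comp_norm_sub_sq_single hg, hsecond, Finset.sum_add_distrib,
    ← Finset.mul_sum, ← hnorm]
  simp
  ring

end Radial

def powProfile (l K q s : ℝ) : ℝ := K * (1 + l ^ 2 * s) ^ q

theorem hasDerivAt_powProfile (l K q : ℝ) {s : ℝ} (hs : 0 < 1 + l ^ 2 * s) :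
    HasDerivAt (powProfile l K q) (powProfile l (K * q * l ^ 2) (q - 1) s) s := by
  have hw : HasDerivAt (fun s => 1 + l ^ 2 * s) (l ^ 2) s := by
    simpa using ((hasDerivAt_id s).const_mul (l ^ 2)).const_add 1
  refine ((hw.rpow_const (p := q) (Or.inl (by positivity))).const_mul K).congr_deriv ?_
  unfold powProfile
  ring

theorem radial_powProfile (l K q : ℝ) {s : ℝ} (hw : 0 < 1 + l ^ 2 * s) :
    4 * s * powProfile l (K * q * l ^ 2 * (q - 1) * l ^ 2) (q - 1 - 1) s
        + 10 * powProfile l (K * q * l ^ 2) (q - 1) s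
      = powProfile l (K * q * l ^ 2 * (4 * q + 6)) (q - 1) s
        - powProfile l (4 * K * q * (q - 1) * l ^ 2) (q - 2) s := by
  have hstep : (1 + l ^ 2 * s) ^ (q - 1) = (1 + l ^ 2 * s) * (1 + l ^ 2 * s) ^ (q - 2) := by
    rw [show q - 1 = 1 + (q - 2) by ring, Real.rpow_add hw, Real.rpow_one]
  simp only [powProfile, show q - 1 - 1 = q - 2 by ring]
  linear_combination (-4 * K * q * (q - 1) * l ^ 2) * hstep

theorem lap_powProfile (l K q : ℝ) (a : E5) :
    lap (fun y => powProfile l K q (‖y - a‖ ^ 2))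
      = fun y => powProfile l (K * q * l ^ 2 * (4 * q + 6)) (q - 1) (‖y - a‖ ^ 2)
        - powProfile l (4 * K * q * (q - 1) * l ^ 2) (q - 2) (‖y - a‖ ^ 2) := by
  rw [lap_comp_norm_sub_sq (fun s hs => hasDerivAt_powProfile l K q (by positivity))
    (fun s hs => hasDerivAt_powProfile l _ _ (by positivity))]
  funext y
  exact radial_powProfile l K q (by positivity)

theorem lap_powProfile_sub (l K₁ q₁ K₂ q₂ : ℝ) (a : E5) :
    lap (fun y => powProfile l K₁ q₁ (‖y - a‖ ^ 2) - powProfile l K₂ q₂ (‖y - a‖ ^ 2))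
      = fun y => (powProfile l (K₁ * q₁ * l ^ 2 * (4 * q₁ + 6)) (q₁ - 1) (‖y - a‖ ^ 2)
          - powProfile l (4 * K₁ * q₁ * (q₁ - 1) * l ^ 2) (q₁ - 2) (‖y - a‖ ^ 2))
        - (powProfile l (K₂ * q₂ * l ^ 2 * (4 * q₂ + 6)) (q₂ - 1) (‖y - a‖ ^ 2)
          - powProfile l (4 * K₂ * q₂ * (q₂ - 1) * l ^ 2) (q₂ - 2) (‖y - a‖ ^ 2)) := by
  rw [lap_comp_norm_sub_sq (g := fun s => powProfile l K₁ q₁ s - powProfile l K₂ q₂ s)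
    (fun s hs => (hasDerivAt_powProfile l K₁ q₁ (by positivity)).sub
      (hasDerivAt_powProfile l K₂ q₂ (by positivity)))
    (fun s hs => (hasDerivAt_powProfile l _ _ (by positivity)).sub
      (hasDerivAt_powProfile l _ _ (by positivity)))]
  funext y
  rw [← radial_powProfile l K₁ q₁ (by positivity), ← radial_powProfile l K₂ q₂ (by positivity)]
  ring

theorem c0_pow_eight : c0 ^ 8 = 105 := by
  rw [c0, one_div]
  exact_mod_cast Real.rpow_inv_natCast_pow (by norm_num) (by norm_num)

theorem deltaFn_pow_nine (a : E5) {l : ℝ} (hl : 0 ≤ l) (x : E5) :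
    deltaFn a l x ^ 9
      = powProfile l (105 * (c0 * l ^ ((1:ℝ)/2)) * l ^ 4) (-(9:ℝ)/2) (‖x - a‖ ^ 2) := by
  have hsqrt : (l ^ ((1:ℝ)/2)) ^ 2 = l := by
    rw [one_div]; exact_mod_cast Real.rpow_inv_natCast_pow hl (by norm_num)
  have hw : ((1 + l ^ 2 * ‖x - a‖ ^ 2) ^ (-(1:ℝ)/2)) ^ 9
      = (1 + l ^ 2 * ‖x - a‖ ^ 2) ^ (-(9:ℝ)/2) := by
    rw [← Real.rpow_natCast, ← Real.rpow_mul (by positivity)]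
    norm_num
  have hK : (c0 * l ^ ((1:ℝ)/2)) ^ 9
      = c0 ^ 8 * ((l ^ ((1:ℝ)/2)) ^ 2) ^ 4 * (c0 * l ^ ((1:ℝ)/2)) := by
    ring
  rw [deltaFn, powProfile, mul_pow, hw, hK, c0_pow_eight, hsqrt]
  ring

theorem lap_deltaFn (a : E5) (l : ℝ) :
    lap (deltaFn a l)
      = fun y => powProfile l (-2 * (c0 * l ^ ((1:ℝ)/2)) * l ^ 2) (-(3:ℝ)/2) (‖y - a‖ ^ 2)
        - powProfile l (3 * (c0 * l ^ ((1:ℝ)/2)) * l ^ 2) (-(5:ℝ)/2) (‖y - a‖ ^ 2) := by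
  rw [show deltaFn a l = fun y => powProfile l (c0 * l ^ ((1:ℝ)/2)) (-(1:ℝ)/2) (‖y - a‖ ^ 2)
    from rfl, lap_powProfile]
  funext y
  simp only [powProfile]
  ring_nf

/-- `Δ²δ_{a,λ} = δ_{a,λ}⁹` pointwise on `ℝ⁵`. -/
theorem stmt_0 (a : E5) (l : ℝ) (hl : 0 < l) (x : E5) :
    lap (lap (deltaFn a l)) x = (deltaFn a l x) ^ 9 := by
  rw [lap_deltaFn, lap_powProfile_sub, deltaFn_pow_nine a hl.le]
  simp only [powProfile]
  ring_nf
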